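/- arXiv:1304.0313 — 5 statements merged into one kernel-verified Lean document; each statement's English description precedes it below -/
import Mathlib

section
/- Let ψ: k[x_1,...,x_n] → k[x_1,...,x_m] be a k-algebra homomorphism with ψ(x_i) ≠ 0 for all i, let u ∈ Γ^m, define ψ^u by ψ^u(x_i) = ψ(x_i)^u, and let u_ψ = (deg_u ψ(x_1),...,deg_u ψ(x_n)) ∈ Γ^n. If f ∈ k[x_1,...,x_n] satisfies ψ^u(f^{u_ψ}) ≠ 0, then ψ(f)^u = ψ^u(f^{u_ψ}). -/
open MvPolynomial

/-- The `w`-weight `a·w` of an exponent vector `a`. -/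
def mwt {n : ℕ} {Γ : Type*} [AddCommGroup Γ] (w : Fin n → Γ) (a : Fin n →₀ ℕ) : Γ :=
  a.sum fun i e => e • w i

/-- The `w`-degree of a polynomial, with `deg_w 0 = ⊥`. -/
noncomputable def wdeg {k : Type*} [CommRing k] {n : ℕ} {Γ : Type*}
    [AddCommGroup Γ] [LinearOrder Γ] [IsOrderedAddMonoid Γ] (w : Fin n → Γ) (f : MvPolynomial (Fin n) k) : WithBot Γ :=
  f.support.sup fun a => ((mwt w a : Γ) : WithBot Γ)

/-- The `w`-initial form of a polynomial (`0` for the zero polynomial). -/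
noncomputable def initForm {k : Type*} [CommRing k] {n : ℕ} {Γ : Type*}
    [AddCommGroup Γ] [LinearOrder Γ] [IsOrderedAddMonoid Γ] (w : Fin n → Γ) (f : MvPolynomial (Fin n) k) :
    MvPolynomial (Fin n) k :=
  ∑ a ∈ f.support.filter (fun a => ((mwt w a : Γ) : WithBot Γ) = wdeg w f),
    monomial a (f.coeff a)

/-!
Say that `g` is a leading part of `p` at weight `D` if `g` is `w`-homogeneous of weight `D`
and all terms of `p - g` have weight `< D` (so `g = 0` means `deg_w p < D`). Leading parts
add at a fixed weight and multiply with weights adding. Now `ψ` is evaluation at the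
`ψ(x_i)`, whose leading parts at weight `u_ψ i` are the `ψ(x_i)^u`. Expanding `f` into
monomials, each of weight `≤ D = deg_{u_ψ} f`, shows that `ψ(f)` has leading part
`ψ^u(f^{u_ψ})` at weight `D`, and a nonzero leading part is the initial form.
-/

namespace MvPolynomial

variable {k Γ : Type*} [CommRing k] [AddCommGroup Γ] {N : ℕ}

lemma mwt_eq_weight (w : Fin N → Γ) : mwt w = Finsupp.weight w := rfl

variable [LinearOrder Γ] [IsOrderedAddMonoid Γ] {w : Fin N → Γ}
  {p q g h : MvPolynomial (Fin N) k} {D E : Γ}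

lemma le_wdeg {a : Fin N →₀ ℕ} (ha : a ∈ p.support) :
    (Finsupp.weight w a : WithBot Γ) ≤ wdeg w p :=
  Finset.le_sup (f := fun a => ((mwt w a : Γ) : WithBot Γ)) ha

lemma wdeg_le_iff : wdeg w p ≤ D ↔ ∀ a ∈ p.support, Finsupp.weight w a ≤ D := by
  simp only [wdeg, Finset.sup_le_iff, WithBot.coe_le_coe, mwt_eq_weight]

lemma wdeg_lt_iff : wdeg w p < D ↔ ∀ a ∈ p.support, Finsupp.weight w a < D := by
  simp only [wdeg, Finset.sup_lt_iff (WithBot.bot_lt_coe D), WithBot.coe_lt_coe, mwt_eq_weight]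

lemma exists_wdeg_eq (hp : p ≠ 0) : ∃ D : Γ, wdeg w p = D :=
  (WithBot.ne_bot_iff_exists.1 ((weightedTotalDegree'_eq_bot_iff w p).not.2 hp)).imp
    fun _ => Eq.symm

lemma wdeg_add_lt (hp : wdeg w p < D) (hq : wdeg w q < D) : wdeg w (p + q) < D := by
  classical
  rw [wdeg_lt_iff] at *
  intro a ha
  rcases Finset.mem_union.1 (support_add ha) with ha | ha
  exacts [hp a ha, hq a ha]

lemma wdeg_mul_lt (hp : wdeg w p < D) (hq : wdeg w q ≤ E) : wdeg w (p * q) < ↑(D + E) := by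
  classical
  rw [wdeg_lt_iff] at *
  rw [wdeg_le_iff] at hq
  intro a ha
  obtain ⟨x, hx, y, hy, rfl⟩ := Finset.mem_add.1 (support_mul p q ha)
  rw [map_add]
  exact add_lt_add_of_lt_of_le (hp x hx) (hq y hy)

lemma initForm_eq_weightedHomogeneousComponent (hD : wdeg w p = D) :
    initForm w p = weightedHomogeneousComponent w D p := by
  classical
  rw [initForm, weightedHomogeneousComponent_apply, hD]
  simp only [WithBot.coe_inj, mwt_eq_weight]

def IsLeadingPart (w : Fin N → Γ) (D : Γ) (p g : MvPolynomial (Fin N) k) : Prop :=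
  IsWeightedHomogeneous w g D ∧ wdeg w (p - g) < D

lemma isLeadingPart_weightedHomogeneousComponent (hp : wdeg w p ≤ D) :
    IsLeadingPart w D p (weightedHomogeneousComponent w D p) := by
  classical
  refine ⟨weightedHomogeneousComponent_isWeightedHomogeneous D p, wdeg_lt_iff.2 fun a ha => ?_⟩
  rw [mem_support_iff, coeff_sub, coeff_weightedHomogeneousComponent] at ha
  have hne : Finsupp.weight w a ≠ D := fun hD => ha (by rw [if_pos hD, sub_self])
  rw [if_neg hne, sub_zero] at ha
  exact lt_of_le_of_ne (wdeg_le_iff.1 hp a (mem_support_iff.2 ha)) hne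

namespace IsLeadingPart

lemma of_isWeightedHomogeneous (hg : IsWeightedHomogeneous w g D) : IsLeadingPart w D g g := by
  refine ⟨hg, ?_⟩
  rw [sub_self, wdeg_lt_iff]
  simp

lemma wdeg_le (hpg : IsLeadingPart w D p g) : wdeg w p ≤ D := by
  classical
  rw [wdeg_le_iff]
  intro a ha
  rw [← add_sub_cancel g p] at ha
  rcases Finset.mem_union.1 (support_add ha) with ha | ha
  · exact (hpg.1 (mem_support_iff.1 ha)).le
  · exact (wdeg_lt_iff.1 hpg.2 a ha).le

lemma weightedHomogeneousComponent_eq (hpg : IsLeadingPart w D p g) :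
    weightedHomogeneousComponent w D p = g := by
  have hlow : weightedHomogeneousComponent w D (p - g) = 0 :=
    weightedHomogeneousComponent_eq_zero' _ _ fun a ha => (wdeg_lt_iff.1 hpg.2 a ha).ne
  rw [map_sub, hpg.1.weightedHomogeneousComponent_same, sub_eq_zero] at hlow
  exact hlow

lemma wdeg_eq (hpg : IsLeadingPart w D p g) (hg : g ≠ 0) : wdeg w p = D := by
  refine le_antisymm hpg.wdeg_le ?_
  obtain ⟨a, ha⟩ := ne_zero_iff.1 hg
  have hweight := hpg.1 ha
  have hcoeff : coeff a p ≠ 0 := by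
    rwa [← hpg.weightedHomogeneousComponent_eq, coeff_weightedHomogeneousComponent,
      if_pos hweight] at ha
  rw [← hweight]
  exact le_wdeg (mem_support_iff.2 hcoeff)

lemma initForm_eq (hpg : IsLeadingPart w D p g) (hg : g ≠ 0) : initForm w p = g := by
  rw [initForm_eq_weightedHomogeneousComponent (hpg.wdeg_eq hg),
    hpg.weightedHomogeneousComponent_eq]

lemma zero_of_lt (hpg : IsLeadingPart w E p g) (hED : E < D) : IsLeadingPart w D p 0 := by
  refine ⟨isWeightedHomogeneous_zero _ _ _, ?_⟩
  rw [sub_zero]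
  exact hpg.wdeg_le.trans_lt (WithBot.coe_lt_coe.2 hED)

lemma add (hpg : IsLeadingPart w D p g) (hqh : IsLeadingPart w D q h) :
    IsLeadingPart w D (p + q) (g + h) := by
  refine ⟨hpg.1.add hqh.1, ?_⟩
  rw [add_sub_add_comm]
  exact wdeg_add_lt hpg.2 hqh.2

lemma sum {ι : Type*} {s : Finset ι} {p g : ι → MvPolynomial (Fin N) k}
    (hpg : ∀ i ∈ s, IsLeadingPart w D (p i) (g i)) :
    IsLeadingPart w D (∑ i ∈ s, p i) (∑ i ∈ s, g i) := by
  classical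
  induction s using Finset.induction_on with
  | empty => exact of_isWeightedHomogeneous (isWeightedHomogeneous_zero _ _ _)
  | insert i s hi ih =>
    rw [Finset.sum_insert hi, Finset.sum_insert hi]
    exact (hpg i (Finset.mem_insert_self i s)).add
      (ih fun j hj => hpg j (Finset.mem_insert_of_mem hj))

lemma mul (hpg : IsLeadingPart w D p g) (hqh : IsLeadingPart w E q h) :
    IsLeadingPart w (D + E) (p * q) (g * h) := by
  refine ⟨hpg.1.mul hqh.1, ?_⟩
  have hsplit : p * q - g * h = (p - g) * q + (q - h) * g := by ring
  rw [hsplit]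
  refine wdeg_add_lt (wdeg_mul_lt hpg.2 hqh.wdeg_le) ?_
  rw [add_comm D E]
  exact wdeg_mul_lt hqh.2 (of_isWeightedHomogeneous hpg.1).wdeg_le

lemma pow (hpg : IsLeadingPart w D p g) (e : ℕ) : IsLeadingPart w (e • D) (p ^ e) (g ^ e) := by
  induction e with
  | zero => simpa using of_isWeightedHomogeneous (isWeightedHomogeneous_one k w)
  | succ e ih => simpa only [pow_succ, succ_nsmul] using ih.mul hpg

lemma prod {ι : Type*} {s : Finset ι} {p g : ι → MvPolynomial (Fin N) k} {d : ι → Γ}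
    (hpg : ∀ i ∈ s, IsLeadingPart w (d i) (p i) (g i)) :
    IsLeadingPart w (∑ i ∈ s, d i) (∏ i ∈ s, p i) (∏ i ∈ s, g i) := by
  classical
  induction s using Finset.induction_on with
  | empty => simpa using of_isWeightedHomogeneous (isWeightedHomogeneous_one k w)
  | insert i s hi ih =>
    rw [Finset.sum_insert hi, Finset.prod_insert hi, Finset.prod_insert hi]
    exact (hpg i (Finset.mem_insert_self i s)).mul
      (ih fun j hj => hpg j (Finset.mem_insert_of_mem hj))

variable {n : ℕ} {v : Fin n → Γ} {P G : Fin n → MvPolynomial (Fin N) k}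

lemma aeval_monomial (hPG : ∀ i, IsLeadingPart w (v i) (P i) (G i))
    (a : Fin n →₀ ℕ) (c : k) :
    IsLeadingPart w (Finsupp.weight v a) (aeval P (monomial a c)) (aeval G (monomial a c)) := by
  rw [MvPolynomial.aeval_monomial, MvPolynomial.aeval_monomial, algebraMap_eq,
    Finsupp.weight_apply, ← zero_add (Finsupp.sum a _)]
  exact (of_isWeightedHomogeneous (isWeightedHomogeneous_C w c)).mul
    (prod fun i _ => (hPG i).pow (a i))

lemma aeval (hPG : ∀ i, IsLeadingPart w (v i) (P i) (G i)) {f : MvPolynomial (Fin n) k}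
    (hf : wdeg v f ≤ D) :
    IsLeadingPart w D (aeval P f) (aeval G (weightedHomogeneousComponent v D f)) := by
  rw [f.as_sum, map_sum, map_sum, map_sum]
  refine sum fun a ha => ?_
  have hmono := isWeightedHomogeneous_monomial v a (coeff a f) rfl
  rcases (wdeg_le_iff.1 hf a ha).eq_or_lt with hD | hD
  · rw [← hD, hmono.weightedHomogeneousComponent_same]
    exact aeval_monomial hPG a _
  · rw [hmono.weightedHomogeneousComponent_ne D hD.ne', map_zero]
    exact (aeval_monomial hPG a _).zero_of_lt hD

end IsLeadingPart

end MvPolynomial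

theorem initForm_comp_general {k Γ : Type*} [CommRing k]
    [AddCommGroup Γ] [LinearOrder Γ] [IsOrderedAddMonoid Γ] {n m : ℕ}
    (ψ : MvPolynomial (Fin n) k →ₐ[k] MvPolynomial (Fin m) k)
    (u : Fin m → Γ) (uψ : Fin n → Γ)
    (huψ : ∀ i, (uψ i : WithBot Γ) = wdeg u (ψ (X i)))
    (f : MvPolynomial (Fin n) k)
    (h : aeval (fun i => initForm u (ψ (X i))) (initForm uψ f) ≠ 0) :
    initForm u (ψ f) = aeval (fun i => initForm u (ψ (X i))) (initForm uψ f) := by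
  have hX : ∀ i, IsLeadingPart u (uψ i) (ψ (X i)) (initForm u (ψ (X i))) := fun i => by
    rw [initForm_eq_weightedHomogeneousComponent (huψ i).symm]
    exact isLeadingPart_weightedHomogeneousComponent (huψ i).ge
  have hf : f ≠ 0 := by
    rintro rfl
    simp [initForm] at h
  obtain ⟨D, hD⟩ := exists_wdeg_eq (w := uψ) hf
  rw [initForm_eq_weightedHomogeneousComponent hD] at h ⊢
  conv_lhs => rw [aeval_unique ψ]
  exact (IsLeadingPart.aeval hX hD.le).initForm_eq h

/-- If `ψ^u(f^{u_ψ}) ≠ 0` then `ψ(f)^u = ψ^u(f^{u_ψ})`. -/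
theorem initForm_comp {k Γ : Type*} [CommRing k] [IsDomain k]
    [AddCommGroup Γ] [LinearOrder Γ] [IsOrderedAddMonoid Γ] {n m : ℕ} (hnm : n ≤ m)
    (ψ : MvPolynomial (Fin n) k →ₐ[k] MvPolynomial (Fin m) k)
    (hψ : ∀ i, ψ (X i) ≠ 0) (u : Fin m → Γ) (uψ : Fin n → Γ)
    (huψ : ∀ i, (uψ i : WithBot Γ) = wdeg u (ψ (X i)))
    (f : MvPolynomial (Fin n) k)
    (h : aeval (fun i => initForm u (ψ (X i))) (initForm uψ f) ≠ 0) :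
    initForm u (ψ f) = aeval (fun i => initForm u (ψ (X i))) (initForm uψ f) :=
  initForm_comp_general ψ u uψ huψ f h
end

section
/- No stable G_a-invariant of k[x_1,...,x_n] has an intruder; i.e., if f is a stable G_a-invariant, then no vertex (i_1,...,i_n) of the Newton polytope of f satisfies i_l ≠ 0 for all l. -/
/-!
By the counit axiom, `σ(x_l) = x_l + z·(…)`. Let `a` be an intruder vertex of `New(f)`, exposed by
a weight `w`. Give `x_l` the weight `w_l` and `z` the largest weight `t` for which no term of any
`σ(x_l)` outweighs `x_l`. Refine this weight lexicographically with `z` first: then every `σ(x_l)`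
has leading weight `w_l`, and unless all `σ(x_l) = x_l` (which would make `k[x_1,…,x_n]`
invariant), one of them has a leading term divisible by `z`. As `a` is exposed by `w`, the leading
term of `σ(f) = f(σ(x_1),…,σ(x_n))` is that of `c_a ∏ σ(x_l)^{a_l}`, which is divisible by `z`
because every `a_l > 0`. This contradicts `σ(f) = f`.
-/

open MvPolynomial

/-- `σ` is a `G_a`-action on `k[x_1,…,x_m]`: a `k`-algebra homomorphism to the
polynomial ring in `z` satisfying the counit axiom (`π ∘ σ = id`) and the
coassociativity axiom with respect to the comultiplication `z ↦ z⊗1 + 1⊗z`. -/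
def IsGaAction {k : Type*} [CommRing k] {m : ℕ}
    (σ : MvPolynomial (Fin m) k →ₐ[k] Polynomial (MvPolynomial (Fin m) k)) : Prop :=
  (∀ f, Polynomial.eval 0 (σ f) = f) ∧
  (∀ f, Polynomial.eval₂ (Polynomial.C.comp σ.toRingHom) Polynomial.X (σ f)
      = Polynomial.eval₂ (Polynomial.C.comp Polynomial.C)
          (Polynomial.C Polynomial.X + Polynomial.X) (σ f))

/-- `f ∈ k[x_1,…,x_n]` is a stable `G_a`-invariant: for some `m ≥ n` there is a
`G_a`-action on `k[x_1,…,x_m]` whose invariant ring contains `f` but does not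
contain `k[x_1,…,x_n]`. -/
def IsStableGaInvariant {k : Type*} [CommRing k] {n : ℕ}
    (f : MvPolynomial (Fin n) k) : Prop :=
  ∃ (m : ℕ) (h : n ≤ m)
    (σ : MvPolynomial (Fin m) k →ₐ[k] Polynomial (MvPolynomial (Fin m) k)),
    IsGaAction σ ∧
    σ (rename (Fin.castLE h) f) ∈ Set.range Polynomial.C ∧
    ¬ ∀ g : MvPolynomial (Fin n) k,
        σ (rename (Fin.castLE h) g) ∈ Set.range Polynomial.C

theorem exists_forall_mul_le_and_exists_mul_eq {ι : Type*} {s : Finset ι} (hs : s.Nonempty)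
    (c d : ι → ℝ) (hd : ∀ i ∈ s, 0 < d i) :
    ∃ t : ℝ, (∀ i ∈ s, d i * t ≤ c i) ∧ ∃ i ∈ s, d i * t = c i := by
  obtain ⟨i₀, hi₀, hmin⟩ := s.exists_min_image (fun i => c i / d i) hs
  refine ⟨c i₀ / d i₀, fun i hi => ?_, i₀, hi₀, mul_div_cancel₀ _ (hd i₀ hi₀).ne'⟩
  rw [← le_div_iff₀' (hd i hi)]
  exact hmin i hi

theorem exists_lt_of_mem_extremePoints_convexHull {E : Type*} [AddCommGroup E] [Module ℝ E]
    [TopologicalSpace E] [IsTopologicalAddGroup E] [ContinuousSMul ℝ E] [LocallyConvexSpace ℝ E]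
    [T2Space E] {S : Set E} (hS : S.Finite) {v : E}
    (hv : v ∈ (convexHull ℝ S).extremePoints ℝ) :
    ∃ ℓ : E →L[ℝ] ℝ, ∀ x ∈ S, x ≠ v → ℓ x < ℓ v := by
  have hvS : v ∉ convexHull ℝ (S \ {v}) := fun hmem =>
    (((convex_convexHull ℝ S).mem_extremePoints_iff_mem_sdiff_convexHull_sdiff).1 hv).2
      (convexHull_mono (Set.sdiff_subset_sdiff_left (subset_convexHull ℝ S)) hmem)
  obtain ⟨ℓ, c, hlt, hc⟩ := geometric_hahn_banach_closed_point (convex_convexHull ℝ _)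
    (hS.sdiff.isCompact_convexHull ℝ).isClosed hvS
  exact ⟨ℓ, fun x hx hxv => (hlt x (subset_convexHull ℝ _ ⟨hx, hxv⟩)).trans hc⟩

theorem ContinuousLinearMap.apply_natCast_eq_weight {ι : Type*} [Fintype ι] [DecidableEq ι]
    (ℓ : (ι → ℝ) →L[ℝ] ℝ) (b : ι →₀ ℕ) :
    ℓ (fun i => (b i : ℝ)) = Finsupp.weight (fun i => ℓ (Pi.single i 1)) b := by
  rw [Finsupp.weight_eq_sum]
  conv_lhs => rw [← Finset.univ_sum_single (fun i => (b i : ℝ))]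
  refine (map_sum ℓ _ _).trans (Finset.sum_congr rfl fun i _ => ?_)
  rw [← mul_one (b i : ℝ), ← smul_eq_mul, Pi.single_smul, ℓ.map_smul, nsmul_eq_mul, smul_eq_mul]

theorem exists_weight_lt_of_mem_extremePoints_newtonPolytope {R : Type*} [CommSemiring R]
    {n : ℕ} {f : MvPolynomial (Fin n) R} {v : Fin n → ℝ}
    (hv : v ∈ Set.extremePoints ℝ (convexHull ℝ
      ((fun a : Fin n →₀ ℕ => fun i => (a i : ℝ)) '' ↑f.support))) :
    ∃ a ∈ f.support, (fun i => (a i : ℝ)) = v ∧ ∃ w : Fin n → ℝ,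
      ∀ b ∈ f.support, b ≠ a → Finsupp.weight w b < Finsupp.weight w a := by
  obtain ⟨a, ha, rfl⟩ := extremePoints_convexHull_subset hv
  obtain ⟨ℓ, hℓ⟩ := exists_lt_of_mem_extremePoints_convexHull (f.support.finite_toSet.image _) hv
  refine ⟨a, ha, rfl, fun i => ℓ (Pi.single i 1), fun b hb hba => ?_⟩
  rw [← ℓ.apply_natCast_eq_weight, ← ℓ.apply_natCast_eq_weight]
  refine hℓ _ ⟨b, hb, rfl⟩ fun h => hba (Finsupp.ext fun i => ?_)
  simpa using congrFun h i

namespace Finsupp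

theorem weight_cons_eq_add {m : ℕ} (t : ℝ) (u : Fin m → ℝ) (μ : Fin (m + 1) →₀ ℕ) :
    weight (Fin.cons t u) μ = μ 0 • t + weight (Fin.cons 0 u) μ := by
  simp [weight_eq_sum, Fin.sum_univ_succ]

theorem weight_cons_single {m : ℕ} (t : ℝ) (u : Fin m → ℝ) (j : Fin m) :
    weight (Fin.cons t u) (cons 0 (single j 1)) = u j := by
  simp [weight_eq_sum, Fin.sum_univ_succ, single_apply]

theorem exists_weight_cons_le {ι : Type*} [Fintype ι] {m : ℕ}
    (S : ι → Finset (Fin (m + 1) →₀ ℕ)) (w : ι → ℝ) (w' : Fin m → ℝ)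
    (h0 : ∀ i, ∀ μ ∈ S i, μ 0 = 0 → weight (Fin.cons 0 w') μ ≤ w i)
    (hS : ∃ i, ∃ μ ∈ S i, μ 0 ≠ 0) :
    ∃ t : ℝ, (∀ i, ∀ μ ∈ S i, weight (Fin.cons t w') μ ≤ w i) ∧
      ∃ i, ∃ μ ∈ S i, μ 0 ≠ 0 ∧ weight (Fin.cons t w') μ = w i := by
  classical
  set T := Finset.univ.sigma fun i => (S i).filter (· 0 ≠ 0)
  have hT : T.Nonempty := by
    obtain ⟨i, μ, hμ, hμ0⟩ := hS
    exact ⟨⟨i, μ⟩, by simp [T, hμ, hμ0]⟩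
  obtain ⟨t, hle, ⟨i, μ⟩, hiμ, heq⟩ := exists_forall_mul_le_and_exists_mul_eq hT
    (fun iμ => w iμ.1 - weight (Fin.cons 0 w') iμ.2) (fun iμ => (iμ.2 0 : ℝ))
    (fun iμ hiμ => Nat.cast_pos.2 (Nat.pos_of_ne_zero (by simp [T] at hiμ; exact hiμ.2)))
  refine ⟨t, fun j ν hν => ?_, i, μ, ?_⟩
  · rw [weight_cons_eq_add, nsmul_eq_mul]
    by_cases hν0 : ν 0 = 0
    · simpa [hν0] using h0 j ν hν hν0
    · have := hle ⟨j, ν⟩ (by simp [T, hν, hν0])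
      simp only at this
      linarith
  · simp only [T, Finset.mem_sigma, Finset.mem_univ, Finset.mem_filter, true_and] at hiμ heq
    refine ⟨hiμ.1, hiμ.2, ?_⟩
    rw [weight_cons_eq_add, nsmul_eq_mul]
    linarith

end Finsupp

namespace MvPolynomial

section LeadingExponent

variable {R σ Γ : Type*} [CommSemiring R] [AddCommMonoid Γ] [LinearOrder Γ]
  {D : (σ →₀ ℕ) →+ Γ}

variable (D) in
def IsLeadingExponent (p : MvPolynomial σ R) (M : σ →₀ ℕ) : Prop :=
  M ∈ p.support ∧ ∀ μ ∈ p.support, D μ ≤ D M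

theorem exists_isLeadingExponent {p : MvPolynomial σ R} (hp : p ≠ 0) :
    ∃ M, IsLeadingExponent D p M :=
  p.support.exists_max_image D (support_nonempty.2 hp)

theorem isLeadingExponent_C {c : R} (hc : c ≠ 0) :
    IsLeadingExponent D (C c : MvPolynomial σ R) 0 := by
  classical
  simp [IsLeadingExponent, support_C, hc]

theorem IsLeadingExponent.sum {ι : Type*} {s : Finset ι} {p : ι → MvPolynomial σ R}
    {M : ι → σ →₀ ℕ} {i : ι} (hi : i ∈ s) (hp : ∀ j ∈ s, IsLeadingExponent D (p j) (M j))
    (hlt : ∀ j ∈ s, j ≠ i → D (M j) < D (M i)) :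
    IsLeadingExponent D (∑ j ∈ s, p j) (M i) := by
  classical
  have hvanish : ∀ j ∈ s, j ≠ i → coeff (M i) (p j) = 0 := fun j hj hji =>
    notMem_support_iff.1 fun hmem => (hp j hj).2 _ hmem |>.not_gt (hlt j hj hji)
  refine ⟨?_, fun ν hν => ?_⟩
  · rw [mem_support_iff, coeff_sum, Finset.sum_eq_single i hvanish (absurd hi)]
    exact mem_support_iff.1 (hp i hi).1
  · obtain ⟨j, hj, hνj⟩ := Finset.mem_biUnion.1 (support_sum hν)
    obtain rfl | hji := eq_or_ne j i
    · exact (hp j hj).2 ν hνj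
    · exact ((hp j hj).2 ν hνj).trans (hlt j hj hji).le

variable [IsOrderedCancelAddMonoid Γ] [NoZeroDivisors R]

theorem IsLeadingExponent.mul (hD : Function.Injective D) {p q : MvPolynomial σ R}
    {M N : σ →₀ ℕ} (hp : IsLeadingExponent D p M) (hq : IsLeadingExponent D q N) :
    IsLeadingExponent D (p * q) (M + N) := by
  classical
  refine ⟨?_, fun ν hν => ?_⟩
  · rw [mem_support_iff, coeff_mul, Finset.sum_eq_single (M, N)]
    · exact mul_ne_zero (mem_support_iff.1 hp.1) (mem_support_iff.1 hq.1)
    · rintro ⟨x, y⟩ hxy hne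
      by_contra hxy0
      obtain ⟨hx, hy⟩ := mul_ne_zero_iff.1 hxy0
      have hsum : D x + D y = D M + D N := by
        rw [← map_add, ← map_add, Finset.HasAntidiagonal.mem_antidiagonal.1 hxy]
      obtain ⟨hxM, hyN⟩ := (add_eq_add_iff_eq_and_eq (hp.2 x (mem_support_iff.2 hx))
        (hq.2 y (mem_support_iff.2 hy))).1 hsum
      exact hne (Prod.ext (hD hxM) (hD hyN))
    · simp
  · obtain ⟨x, hx, y, hy, rfl⟩ := Finset.mem_add.1 (support_mul p q hν)
    rw [map_add, map_add]
    exact add_le_add (hp.2 x hx) (hq.2 y hy)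

variable [Nontrivial R]

theorem IsLeadingExponent.pow (hD : Function.Injective D) {p : MvPolynomial σ R}
    {M : σ →₀ ℕ} (hp : IsLeadingExponent D p M) (e : ℕ) :
    IsLeadingExponent D (p ^ e) (e • M) := by
  induction e with
  | zero => simpa using isLeadingExponent_C (D := D) (one_ne_zero : (1 : R) ≠ 0)
  | succ e ih => simpa [pow_succ, succ_nsmul] using ih.mul hD hp

theorem IsLeadingExponent.prod (hD : Function.Injective D) {ι : Type*} (s : Finset ι)
    {p : ι → MvPolynomial σ R} {M : ι → σ →₀ ℕ}
    (hp : ∀ i ∈ s, IsLeadingExponent D (p i) (M i)) :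
    IsLeadingExponent D (∏ i ∈ s, p i) (∑ i ∈ s, M i) := by
  classical
  induction s using Finset.induction_on with
  | empty => simpa using isLeadingExponent_C (D := D) (one_ne_zero : (1 : R) ≠ 0)
  | insert i s hi ih =>
    rw [Finset.prod_insert hi, Finset.sum_insert hi]
    exact (hp i (s.mem_insert_self i)).mul hD (ih fun j hj => hp j (Finset.mem_insert_of_mem hj))

theorem IsLeadingExponent.aeval {ι : Type*} [Fintype ι] (hD : Function.Injective D)
    {q : ι → MvPolynomial σ R} {L : ι → σ →₀ ℕ} (hL : ∀ i, IsLeadingExponent D (q i) (L i))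
    {f : MvPolynomial ι R} {a : ι →₀ ℕ} (ha : a ∈ f.support)
    (hlt : ∀ b ∈ f.support, b ≠ a → D (∑ i, b i • L i) < D (∑ i, a i • L i)) :
    IsLeadingExponent D (aeval q f) (∑ i, a i • L i) := by
  have hterm : ∀ b ∈ f.support,
      IsLeadingExponent D (C (coeff b f) * ∏ i, q i ^ b i) (∑ i, b i • L i) := fun b hb => by
    simpa using (isLeadingExponent_C (mem_support_iff.1 hb)).mul hD
      (IsLeadingExponent.prod hD Finset.univ fun i _ => (hL i).pow hD (b i))
  rw [aeval_def, eval₂_eq']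
  exact IsLeadingExponent.sum ha hterm hlt

end LeadingExponent

section WeightLex

open Finsupp

variable {R σ : Type*} [CommSemiring R]

noncomputable def weightLex (u : σ → ℝ) : (σ →₀ ℕ) →+ ℝ ×ₗ Lex (σ →₀ ℕ) where
  toFun μ := toLex (weight u μ, toLex μ)
  map_zero' := by simp
  map_add' _ _ := by simp; rfl

theorem weightLex_injective {u : σ → ℝ} : Function.Injective (weightLex u) := fun _ _ h =>
  congrArg (fun x : ℝ ×ₗ Lex (σ →₀ ℕ) => ofLex (ofLex x).2) h

variable [LinearOrder σ] {u : σ → ℝ}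

theorem weightLex_lt_of_weight_lt {μ ν : σ →₀ ℕ} (h : weight u μ < weight u ν) :
    weightLex u μ < weightLex u ν :=
  Prod.Lex.toLex_lt_toLex.2 (Or.inl h)

theorem IsLeadingExponent.weight_eq {p : MvPolynomial σ R} {L μ : σ →₀ ℕ}
    (hL : IsLeadingExponent (weightLex u) p L) {c : ℝ}
    (hle : ∀ ν ∈ p.support, weight u ν ≤ c) (hμ : μ ∈ p.support) (hμc : weight u μ = c) :
    weight u L = c :=
  le_antisymm (hle L hL.1) (hμc ▸ Prod.Lex.monotone_fst _ _ (hL.2 μ hμ))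

theorem IsLeadingExponent.apply_zero_le {m : ℕ} {u : Fin (m + 1) → ℝ}
    {p : MvPolynomial (Fin (m + 1)) R} {L μ : Fin (m + 1) →₀ ℕ}
    (hL : IsLeadingExponent (weightLex u) p L) (hμ : μ ∈ p.support)
    (hw : weight u μ = weight u L) : μ 0 ≤ L 0 := by
  by_contra! hlt
  have hlex : toLex L < toLex μ :=
    Finsupp.Lex.lt_iff.2 ⟨0, fun j hj => absurd hj (Fin.not_lt_zero j), hlt⟩
  exact (hL.2 μ hμ).not_gt (Prod.Lex.toLex_lt_toLex.2 (Or.inr ⟨hw.symm, hlex⟩))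

end WeightLex

section FinSuccEquiv

variable {R : Type*} [CommSemiring R] {m : ℕ}

theorem coeff_finSuccEquiv_symm (p : Polynomial (MvPolynomial (Fin m) R))
    (μ : Fin (m + 1) →₀ ℕ) :
    coeff μ ((finSuccEquiv R m).symm p) = coeff μ.tail (p.coeff (μ 0)) := by
  have h := finSuccEquiv_coeff_coeff μ.tail ((finSuccEquiv R m).symm p) (μ 0)
  rwa [AlgEquiv.apply_symm_apply, Finsupp.cons_tail, eq_comm] at h

theorem mem_range_C_iff_forall_mem_support_finSuccEquiv_symm
    {p : Polynomial (MvPolynomial (Fin m) R)} :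
    p ∈ Set.range Polynomial.C ↔ ∀ μ ∈ ((finSuccEquiv R m).symm p).support, μ 0 = 0 := by
  constructor
  · rintro ⟨c, rfl⟩ μ hμ
    by_contra h0
    rw [mem_support_iff, coeff_finSuccEquiv_symm, Polynomial.coeff_C, if_neg h0,
      coeff_zero] at hμ
    exact hμ rfl
  · intro h
    refine ⟨p.coeff 0, Polynomial.ext fun i => ?_⟩
    rcases eq_or_ne i 0 with rfl | hi
    · rw [Polynomial.coeff_C_zero]
    · ext ν
      have hν := coeff_finSuccEquiv_symm p (Finsupp.cons i ν)
      rw [Finsupp.cons_zero, Finsupp.tail_cons] at hν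
      rw [Polynomial.coeff_C, if_neg hi, coeff_zero, ← hν, eq_comm, ← notMem_support_iff]
      exact fun hmem => hi (Finsupp.cons_zero i ν ▸ h _ hmem)

theorem mem_support_finSuccEquiv_symm_iff_of_eval_zero [Nontrivial R]
    {p : Polynomial (MvPolynomial (Fin m) R)} {j : Fin m} (hp : p.eval 0 = X j)
    {μ : Fin (m + 1) →₀ ℕ} (hμ : μ 0 = 0) :
    μ ∈ ((finSuccEquiv R m).symm p).support ↔ μ = Finsupp.cons 0 (Finsupp.single j 1) := by
  have hcons : μ = Finsupp.cons 0 (Finsupp.single j 1) ↔ Finsupp.single j 1 = μ.tail := by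
    conv_lhs => rw [← Finsupp.cons_tail μ, hμ]
    rw [(Finsupp.cons_right_injective 0).eq_iff, eq_comm]
  rw [hcons, mem_support_iff, coeff_finSuccEquiv_symm, hμ, Polynomial.coeff_zero_eq_eval_zero,
    hp, coeff_X]
  split_ifs with h <;> simp [h]

end FinSuccEquiv

theorem eq_C_X_of_aeval_mem_range_C {R : Type*} [CommSemiring R] [NoZeroDivisors R]
    [Nontrivial R] {n m : ℕ} {f : MvPolynomial (Fin n) R} {a : Fin n →₀ ℕ} (ha : a ∈ f.support)
    (ha0 : ∀ l, a l ≠ 0)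
    {w : Fin n → ℝ} (hw : ∀ b ∈ f.support, b ≠ a → Finsupp.weight w b < Finsupp.weight w a)
    {x : Fin n → Fin m} (hx : Function.Injective x)
    {p : Fin n → Polynomial (MvPolynomial (Fin m) R)} (hp : ∀ l, (p l).eval 0 = X (x l))
    (hf : aeval p f ∈ Set.range Polynomial.C) : ∀ l, p l = Polynomial.C (X (x l)) := by
  by_contra! hne
  -- `q l` is `p l` read in `R[z, x_1, …, x_m]`, with `z` the variable `0`
  set q := fun l => (finSuccEquiv R m).symm (p l)
  set e := fun l => Finsupp.cons 0 (Finsupp.single (x l) 1)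
  have hq0 : ∀ l μ, μ 0 = 0 → (μ ∈ (q l).support ↔ μ = e l) := fun l _ =>
    mem_support_finSuccEquiv_symm_iff_of_eval_zero (hp l)
  have he : ∀ l, e l ∈ (q l).support := fun l => (hq0 l (e l) (Finsupp.cons_zero _ _)).2 rfl
  set w' := Function.extend x w 0
  have hwe : ∀ l t, Finsupp.weight (Fin.cons t w') (e l) = w l := fun l t => by
    rw [Finsupp.weight_cons_single]
    exact hx.extend_apply w 0 l
  have hz : ∃ l, ∃ μ ∈ (q l).support, μ 0 ≠ 0 := by
    obtain ⟨l, hl⟩ := hne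
    by_contra! hz
    obtain ⟨c, hc⟩ := mem_range_C_iff_forall_mem_support_finSuccEquiv_symm.2 (hz l)
    exact hl (by rw [← hc, ← hp l, ← hc, Polynomial.eval_C])
  obtain ⟨t, hle, l₁, μ₁, hμ₁, hμ₁0, hμ₁w⟩ := Finsupp.exists_weight_cons_le
    (fun l => (q l).support) w w' (fun l μ hμ hμ0 => ((hq0 l μ hμ0).1 hμ ▸ hwe l 0).le) hz
  set u : Fin (m + 1) → ℝ := Fin.cons t w'
  choose L hL using fun l =>
    exists_isLeadingExponent (D := weightLex u) (support_nonempty.1 ⟨e l, he l⟩)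
  have hLw : ∀ l, Finsupp.weight u (L l) = w l := fun l =>
    (hL l).weight_eq (hle l) (he l) (hwe l t)
  have hLsum : ∀ b : Fin n →₀ ℕ, Finsupp.weight u (∑ l, b l • L l) = Finsupp.weight w b :=
    fun b => by simp only [map_sum, map_nsmul, hLw, Finsupp.weight_eq_sum]
  have hF : IsLeadingExponent (weightLex u) (aeval q f) (∑ l, a l • L l) :=
    IsLeadingExponent.aeval weightLex_injective hL ha fun b hb hba => weightLex_lt_of_weight_lt
      (by rw [hLsum, hLsum]; exact hw b hb hba)
  have hFz : (∑ l, a l • L l) 0 = 0 := by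
    refine mem_range_C_iff_forall_mem_support_finSuccEquiv_symm.1 hf _ ?_
    rw [← AlgEquiv.coe_toAlgHom, ← AlgHom.comp_apply, comp_aeval]
    exact hF.1
  have hL₁ : μ₁ 0 ≤ L l₁ 0 := (hL l₁).apply_zero_le hμ₁ (by rw [hLw, hμ₁w])
  simp only [Finsupp.coe_finsetSum, Finset.sum_apply, Finsupp.smul_apply, smul_eq_mul,
    Finset.sum_eq_zero_iff, Finset.mem_univ, true_implies, mul_eq_zero] at hFz
  exact (hFz l₁).elim (ha0 l₁) fun h => by omega

end MvPolynomial

/-- Theorem 1.1: no stable `G_a`-invariant has an intruder, i.e. every vertex of the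
Newton polytope of a stable `G_a`-invariant has some vanishing coordinate. -/
theorem stableInvariant_no_intruder {k : Type*} [CommRing k] [IsDomain k] {n : ℕ}
    (f : MvPolynomial (Fin n) k) (hf : IsStableGaInvariant f)
    (v : Fin n → ℝ)
    (hv : v ∈ Set.extremePoints ℝ (convexHull ℝ
      ((fun a : Fin n →₀ ℕ => fun i => (a i : ℝ)) '' ↑f.support))) :
    ∃ l, v l = 0 := by
  obtain ⟨a, ha, rfl, w, hw⟩ := exists_weight_lt_of_mem_extremePoints_newtonPolytope hv
  by_contra! ha0
  obtain ⟨m, h, σ, ⟨hσ, -⟩, hinv, hns⟩ := hf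
  have haeval : aeval (fun l => σ (X (Fin.castLE h l))) f = σ (rename (Fin.castLE h) f) := by
    conv_rhs => rw [aeval_unique σ, aeval_rename]
    rfl
  have hσX := eq_C_X_of_aeval_mem_range_C ha (fun l hl => ha0 l (by simp [hl])) hw
    (Fin.castLE_injective h) (fun l => hσ _) (haeval ▸ hinv)
  have hσC : σ.comp (rename (Fin.castLE h)) = Polynomial.CAlgHom.comp (rename (Fin.castLE h)) :=
    algHom_ext fun l => by simp [hσX l]
  exact hns fun g => ⟨_, (DFunLike.congr_fun hσC g).symm⟩
end

section
/- A nonzero polynomial f ∈ k[x_1,...,x_n] has no intruder if and only if for every w ∈ ℝ^n such that the w-initial form f^w is a monomial, there exists i with 1 ≤ i ≤ n such that x_i does not divide f^w. -/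
open MvPolynomial

/-!
A vertex of the Newton polytope is exactly an exponent `a ∈ supp f` at which some weight `w` is
strictly maximal on `supp f`: Hahn–Banach separates `a` from the hull of the other exponents, and
conversely the open half-space `{y | w·y < w·a}` with `a` added is convex, so it contains the
polytope. On the other hand, `w` is strictly maximal at `a` exactly when `f^w` is the monomial
`c xᵃ` of `f`, so `c ≠ 0` and `x_i` divides `f^w` iff `a_i ≠ 0`.
-/

open Matrix

theorem convex_insert_setOf_lt {E : Type*} [AddCommGroup E] [Module ℝ E] (l : E →ₗ[ℝ] ℝ)
    (x : E) :
    Convex ℝ (insert x {y | l y < l x}) := by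
  rw [convex_iff_openSegment_subset]
  rintro a ha b hb z ⟨θa, θb, hθa, hθb, hθ, rfl⟩
  have hla : l a ≤ l x := by rcases ha with rfl | ha; exacts [le_rfl, ha.le]
  have hlb : l b ≤ l x := by rcases hb with rfl | hb; exacts [le_rfl, hb.le]
  by_cases hab : a = x ∧ b = x
  · left
    rw [hab.1, hab.2, ← add_smul, hθ, one_smul]
  · right
    have hstrict : l a < l x ∨ l b < l x := by
      rcases not_and_or.1 hab with h | h
      exacts [.inl (ha.resolve_left h), .inr (hb.resolve_left h)]
    simp only [Set.mem_ofPred_eq, map_add, map_smul, smul_eq_mul]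
    rw [← one_mul (l x), ← hθ, add_mul]
    rcases hstrict with h | h
    · linarith [mul_lt_mul_of_pos_left h hθa, mul_le_mul_of_nonneg_left hlb hθb.le]
    · linarith [mul_le_mul_of_nonneg_left hla hθa.le, mul_lt_mul_of_pos_left h hθb]

section Geometry

variable {E : Type*} [AddCommGroup E] [Module ℝ E] [TopologicalSpace E] [IsTopologicalAddGroup E]
  [ContinuousSMul ℝ E] [LocallyConvexSpace ℝ E] [T2Space E]

theorem mem_extremePoints_convexHull_iff_exists_forall_lt {s : Set E} (hs : s.Finite) {x : E} :
    x ∈ (convexHull ℝ s).extremePoints ℝ ↔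
      x ∈ s ∧ ∃ l : StrongDual ℝ E, ∀ y ∈ s, y ≠ x → l y < l x := by
  have hconv := convex_convexHull ℝ s
  constructor
  · intro hx
    have hx' : x ∉ convexHull ℝ (s \ {x}) := fun h =>
      (hconv.mem_extremePoints_iff_mem_sdiff_convexHull_sdiff.1 hx).2 <|
        convexHull_mono (Set.sdiff_subset_sdiff_left (subset_convexHull ℝ s)) h
    obtain ⟨l, u, hl, hu⟩ := geometric_hahn_banach_closed_point (convex_convexHull ℝ _)
      ((hs.sdiff (t := {x})).isClosed_convexHull (𝕜 := ℝ)) hx'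
    exact ⟨extremePoints_convexHull_subset hx, l,
      fun y hy hyx => (hl y (subset_convexHull ℝ _ ⟨hy, hyx⟩)).trans hu⟩
  · rintro ⟨hxs, l, hl⟩
    have hsub : convexHull ℝ s ⊆ insert x {y | l y < l x} :=
      convexHull_min (fun y hy => (eq_or_ne y x).imp id (hl y hy))
        (convex_insert_setOf_lt l.toLinearMap x)
    have hsdiff : convexHull ℝ s \ {x} = convexHull ℝ s ∩ {y | l y < l x} := by
      ext y
      simp only [Set.mem_sdiff, Set.mem_singleton_iff, Set.mem_inter_iff, Set.mem_ofPred_eq]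
      exact ⟨fun ⟨hy, hyx⟩ => ⟨hy, (hsub hy).resolve_left hyx⟩,
        fun ⟨hy, hly⟩ => ⟨hy, by rintro rfl; exact lt_irrefl _ hly⟩⟩
    rw [hconv.mem_extremePoints_iff_convex_sdiff, hsdiff]
    exact ⟨subset_convexHull ℝ s hxs, hconv.inter (convex_halfSpace_lt l.isLinear _)⟩

end Geometry

theorem mem_extremePoints_convexHull_iff_exists_dotProduct_lt {ι : Type*} [Fintype ι]
    [DecidableEq ι] {s : Set (ι → ℝ)} (hs : s.Finite) {x : ι → ℝ} :
    x ∈ (convexHull ℝ s).extremePoints ℝ ↔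
      x ∈ s ∧ ∃ w : ι → ℝ, ∀ y ∈ s, y ≠ x → y ⬝ᵥ w < x ⬝ᵥ w := by
  rw [mem_extremePoints_convexHull_iff_exists_forall_lt hs]
  refine and_congr_right fun _ => ⟨fun ⟨l, hl⟩ => ?_, fun ⟨w, hw⟩ => ?_⟩
  · refine ⟨(dotProductEquiv ℝ ι).symm l.toLinearMap, fun y hy hyx => ?_⟩
    have hl_eq : ∀ z, z ⬝ᵥ (dotProductEquiv ℝ ι).symm l.toLinearMap = l z := fun z => by
      rw [dotProduct_comm, ← dotProductEquiv_apply_apply, LinearEquiv.apply_symm_apply]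
      rfl
    simpa only [hl_eq] using hl y hy hyx
  · refine ⟨LinearMap.toContinuousLinearMap (dotProductEquiv ℝ ι w), fun y hy hyx => ?_⟩
    simpa [dotProduct_comm w] using hw y hy hyx

section InitialForm

variable {k Γ : Type*} [CommRing k] [AddCommGroup Γ] [LinearOrder Γ] [IsOrderedAddMonoid Γ]
  {n : ℕ} {w : Fin n → Γ} {f : MvPolynomial (Fin n) k}

theorem coeff_initForm (b : Fin n →₀ ℕ) :
    coeff b (initForm w f) =
      if ((mwt w b : Γ) : WithBot Γ) = wdeg w f then coeff b f else 0 := by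
  rw [initForm, coeff_sum]
  simp_rw [coeff_monomial]
  rw [Finset.sum_ite_eq']
  by_cases h : ((mwt w b : Γ) : WithBot Γ) = wdeg w f <;> by_cases hb : coeff b f = 0 <;>
    simp [h, hb]

theorem mwt_le_wdeg {b : Fin n →₀ ℕ} (hb : b ∈ f.support) :
    ((mwt w b : Γ) : WithBot Γ) ≤ wdeg w f :=
  Finset.le_sup (f := fun a => ((mwt w a : Γ) : WithBot Γ)) hb

theorem exists_mem_support_mwt_eq_wdeg (hf : f ≠ 0) :
    ∃ b ∈ f.support, ((mwt w b : Γ) : WithBot Γ) = wdeg w f :=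
  let ⟨b, hb, h⟩ := Finset.exists_mem_eq_sup f.support (support_nonempty.2 hf)
    (fun a => ((mwt w a : Γ) : WithBot Γ))
  ⟨b, hb, h.symm⟩

theorem initForm_eq_monomial_iff (hf : f ≠ 0) {a : Fin n →₀ ℕ} {c : k} :
    initForm w f = monomial a c ↔
      a ∈ f.support ∧ c = coeff a f ∧ ∀ b ∈ f.support, b ≠ a → mwt w b < mwt w a := by
  constructor
  · intro h
    have htop : ∀ b ∈ f.support, ((mwt w b : Γ) : WithBot Γ) = wdeg w f →
        b = a ∧ c = coeff b f := by
      intro b hb hbw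
      have hcoeff := coeff_initForm (w := w) (f := f) b
      rw [h, coeff_monomial, if_pos hbw] at hcoeff
      rw [mem_support_iff, ← hcoeff] at hb
      split_ifs at hcoeff hb with hab
      · exact ⟨hab.symm, hcoeff⟩
      · exact absurd rfl hb
    obtain ⟨b, hb, hbw⟩ := exists_mem_support_mwt_eq_wdeg (w := w) hf
    obtain ⟨rfl, rfl⟩ := htop b hb hbw
    refine ⟨hb, rfl, fun b' hb' hne => ?_⟩
    have hle := hbw ▸ mwt_le_wdeg (w := w) hb'
    exact WithBot.coe_lt_coe.1 (hle.lt_of_ne fun heq => hne (htop b' hb' (heq.trans hbw)).1)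
  · rintro ⟨ha, rfl, hmax⟩
    have hwdeg : wdeg w f = mwt w a :=
      le_antisymm (Finset.sup_le fun b hb => by
        rcases eq_or_ne b a with rfl | hne
        exacts [le_rfl, WithBot.coe_le_coe.2 (hmax b hb hne).le]) (mwt_le_wdeg ha)
    ext b
    rw [coeff_initForm, coeff_monomial, hwdeg]
    simp only [WithBot.coe_inj]
    rcases eq_or_ne b a with rfl | hne
    · simp
    rw [if_neg hne.symm, ite_eq_right_iff]
    intro hba
    by_contra hb
    exact (hmax b (mem_support_iff.2 hb) hne).ne hba

end InitialForm

section NewtonPolytope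

variable {n : ℕ}

def expVec (a : Fin n →₀ ℕ) : Fin n → ℝ := fun i => a i

theorem expVec_injective : Function.Injective (expVec (n := n)) :=
  fun _ _ h => Finsupp.ext fun i => by simpa [expVec] using congrFun h i

theorem mwt_eq_expVec_dotProduct (w : Fin n → ℝ) (a : Fin n →₀ ℕ) :
    mwt w a = expVec a ⬝ᵥ w := by
  rw [mwt, Finsupp.sum_fintype _ _ fun i => zero_smul ℕ (w i)]
  simp [dotProduct, expVec, nsmul_eq_mul]

def newtonPolytope {k : Type*} [CommRing k] (f : MvPolynomial (Fin n) k) : Set (Fin n → ℝ) :=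
  convexHull ℝ (expVec '' f.support)

theorem expVec_mem_extremePoints_newtonPolytope_iff {k : Type*} [CommRing k]
    {f : MvPolynomial (Fin n) k} {a : Fin n →₀ ℕ} :
    expVec a ∈ (newtonPolytope f).extremePoints ℝ ↔
      a ∈ f.support ∧ ∃ w : Fin n → ℝ, ∀ b ∈ f.support, b ≠ a → mwt w b < mwt w a := by
  rw [newtonPolytope, mem_extremePoints_convexHull_iff_exists_dotProduct_lt
    (f.support.finite_toSet.image _), expVec_injective.mem_set_image]
  simp only [Set.forall_mem_image, expVec_injective.ne_iff, mwt_eq_expVec_dotProduct,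
    Finset.mem_coe]

end NewtonPolytope

theorem no_intruder_iff_general {k : Type*} [CommRing k] {n : ℕ}
    (f : MvPolynomial (Fin n) k) (hf : f ≠ 0) :
    (∀ v ∈ Set.extremePoints ℝ (convexHull ℝ
        ((fun a : Fin n →₀ ℕ => fun i => (a i : ℝ)) '' ↑f.support)), ∃ l, v l = 0)
    ↔ ∀ w : Fin n → ℝ, (∃ a c, initForm w f = monomial a c) →
        ∃ i, ¬ X i ∣ initForm w f := by
  change (∀ v ∈ (newtonPolytope f).extremePoints ℝ, ∃ l, v l = 0) ↔ _
  constructor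
  · rintro H w ⟨a, c, hm⟩
    obtain ⟨ha, rfl, hmax⟩ := (initForm_eq_monomial_iff hf).1 hm
    obtain ⟨l, hl⟩ := H _ (expVec_mem_extremePoints_newtonPolytope_iff.2 ⟨ha, w, hmax⟩)
    refine ⟨l, ?_⟩
    rw [hm, X_dvd_monomial, not_or]
    exact ⟨mem_support_iff.1 ha, not_not.2 (by simpa [expVec] using hl)⟩
  · intro H v hv
    obtain ⟨a, -, rfl⟩ := extremePoints_convexHull_subset hv
    obtain ⟨ha, w, hmax⟩ := expVec_mem_extremePoints_newtonPolytope_iff.1 hv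
    have hm := (initForm_eq_monomial_iff hf).2 ⟨ha, rfl, hmax⟩
    obtain ⟨i, hi⟩ := H w ⟨a, _, hm⟩
    rw [hm, X_dvd_monomial, not_or, not_not] at hi
    exact ⟨i, by simp [expVec, hi.2]⟩

/-- A nonzero `f` has no intruder iff for every `w ∈ ℝ^n` with `f^w` a monomial,
some variable `x_i` does not divide `f^w`. -/
theorem no_intruder_iff {k : Type*} [CommRing k] [IsDomain k] {n : ℕ}
    (f : MvPolynomial (Fin n) k) (hf : f ≠ 0) :
    (∀ v ∈ Set.extremePoints ℝ (convexHull ℝ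
        ((fun a : Fin n →₀ ℕ => fun i => (a i : ℝ)) '' ↑f.support)), ∃ l, v l = 0)
    ↔ ∀ w : Fin n → ℝ, (∃ a c, initForm w f = monomial a c) →
        ∃ i, ¬ X i ∣ initForm w f :=
  no_intruder_iff_general f hf
end

section
/- Let f_1,...,f_m generate k[x_1,...,x_m] as a k-algebra, i.e. k[f_1,...,f_m] = k[x_1,...,x_m], where k is a field of characteristic zero. Then the k-algebra endomorphism σ of k[x_1,...,x_m][z]-type defined by f_1 ↦ f_1 + z and f_i ↦ f_i for i ≥ 2 is a G_a-action on k[x_1,...,x_m] whose ring of invariants is exactly k[f_2,...,f_m]. -/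
open MvPolynomial

/-!
Everything is decided on the generators `f₁` (translated by `z`) and `f₂, …, fₘ` (fixed),
since `k`-algebra maps out of `k[x] = k[f₁, …, fₘ]` are determined there; in particular the
counit and coassociativity identities reduce to `f₁ + 0 = f₁` and `(f₁ + z₁) + z₂ = f₁ + (z₁ + z₂)`.
For the invariants, specialising `z` to `-f₁` gives an endomorphism of `k[x]` that sends every
generator into `k[f₂, …, fₘ]` and restricts to the identity on invariants.
-/

namespace Polynomial

variable {k R : Type*} [CommSemiring k] [CommRing R] [Algebra k R]
  {σ : R →ₐ[k] R[X]} {g₀ : R} {t : Set R}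

theorem eval_zero_apply_of_adjoin_insert (hgen : Algebra.adjoin k (insert g₀ t) = ⊤)
    (h₀ : σ g₀ = C g₀ + X) (ht : ∀ g ∈ t, σ g = C g) (p : R) : (σ p).eval 0 = p := by
  have hcomp : ((aeval (0 : R)).restrictScalars k).comp σ = AlgHom.id k R := by
    refine AlgHom.ext_of_adjoin_eq_top hgen (Set.forall_mem_insert.2 ⟨?_, fun g hg => ?_⟩)
    · simp [h₀]
    · simp [ht g hg]
  simpa using congr($hcomp p)

theorem map_apply_eq_eval₂_of_adjoin_insert (hgen : Algebra.adjoin k (insert g₀ t) = ⊤)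
    (h₀ : σ g₀ = C g₀ + X) (ht : ∀ g ∈ t, σ g = C g) (p : R) :
    (σ p).map (σ : R →+* R[X]) = (σ p).eval₂ (C.comp C) (C X + X) := by
  have hcomp : (mapAlgHom σ).comp σ = ((aeval (C X + X : R[X][X])).restrictScalars k).comp σ := by
    refine AlgHom.ext_of_adjoin_eq_top hgen (Set.forall_mem_insert.2 ⟨?_, fun g hg => ?_⟩)
    · simp [h₀, add_assoc]
    · simp [ht g hg]
  exact congr($hcomp p)

theorem apply_mem_range_C_iff_mem_adjoin (hgen : Algebra.adjoin k (insert g₀ t) = ⊤)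
    (h₀ : σ g₀ = C g₀ + X) (ht : ∀ g ∈ t, σ g = C g) (p : R) :
    σ p ∈ Set.range C ↔ p ∈ Algebra.adjoin k t := by
  constructor
  · rintro ⟨c, hc⟩
    have hc_eq : c = p := by
      simpa [← hc] using eval_zero_apply_of_adjoin_insert hgen h₀ ht p
    let ψ : R →ₐ[k] R := ((aeval (-g₀)).restrictScalars k).comp σ
    have hψ : ψ.range ≤ Algebra.adjoin k t := by
      rw [← Algebra.map_top, ← hgen, AlgHom.map_adjoin, Algebra.adjoin_le_iff,
        Set.image_insert_eq, Set.insert_subset_iff]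
      refine ⟨by simp [ψ, h₀], ?_⟩
      rintro _ ⟨g, hg, rfl⟩
      simpa [ψ, ht g hg] using Algebra.subset_adjoin hg
    simpa [ψ, ← hc, hc_eq] using hψ ⟨p, rfl⟩
  · intro hp
    have hle : Algebra.adjoin k t ≤ AlgHom.equalizer σ (IsScalarTower.toAlgHom k R R[X]) :=
      Algebra.adjoin_le fun g hg => by simp [ht g hg]
    exact ⟨p, (hle hp).symm⟩

end Polynomial

theorem gaAction_of_coords_general {k : Type*} [Field k] {m : ℕ} (hm : 0 < m)
    (f : Fin m → MvPolynomial (Fin m) k)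
    (hgen : Algebra.adjoin k (Set.range f) = ⊤)
    (σ : MvPolynomial (Fin m) k →ₐ[k] Polynomial (MvPolynomial (Fin m) k))
    (hσ1 : σ (f ⟨0, hm⟩) = Polynomial.C (f ⟨0, hm⟩) + Polynomial.X)
    (hσ2 : ∀ i : Fin m, i ≠ ⟨0, hm⟩ → σ (f i) = Polynomial.C (f i)) :
    IsGaAction σ ∧
    ∀ p : MvPolynomial (Fin m) k, σ p ∈ Set.range Polynomial.C ↔
      p ∈ Algebra.adjoin k {q | ∃ i : Fin m, i ≠ ⟨0, hm⟩ ∧ q = f i} := by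
  set t := {q | ∃ i : Fin m, i ≠ ⟨0, hm⟩ ∧ q = f i}
  have hgen_insert : Algebra.adjoin k (insert (f ⟨0, hm⟩) t) = ⊤ := by
    rw [← hgen, ← Set.insert_image_compl_eq_range f ⟨0, hm⟩]
    congr 2
    ext q
    simp [t, eq_comm]
  have ht : ∀ g ∈ t, σ g = Polynomial.C g := by
    rintro _ ⟨i, hi, rfl⟩
    exact hσ2 i hi
  exact ⟨⟨Polynomial.eval_zero_apply_of_adjoin_insert hgen_insert hσ1 ht,
    Polynomial.map_apply_eq_eval₂_of_adjoin_insert hgen_insert hσ1 ht⟩,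
    Polynomial.apply_mem_range_C_iff_mem_adjoin hgen_insert hσ1 ht⟩

/-- If `k[f_1,…,f_m] = k[x_1,…,x_m]` over a field `k` of characteristic zero, then
the `k`-algebra homomorphism `σ` defined by `f_1 ↦ f_1 + z`, `f_i ↦ f_i` (`i ≥ 2`)
is a `G_a`-action whose ring of invariants is exactly `k[f_2,…,f_m]`. -/
theorem gaAction_of_coords {k : Type*} [Field k] [CharZero k] {m : ℕ} (hm : 0 < m)
    (f : Fin m → MvPolynomial (Fin m) k)
    (hgen : Algebra.adjoin k (Set.range f) = ⊤)
    (σ : MvPolynomial (Fin m) k →ₐ[k] Polynomial (MvPolynomial (Fin m) k))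
    (hσ1 : σ (f ⟨0, hm⟩) = Polynomial.C (f ⟨0, hm⟩) + Polynomial.X)
    (hσ2 : ∀ i : Fin m, i ≠ ⟨0, hm⟩ → σ (f i) = Polynomial.C (f i)) :
    IsGaAction σ ∧
    ∀ p : MvPolynomial (Fin m) k, σ p ∈ Set.range Polynomial.C ↔
      p ∈ Algebra.adjoin k {q | ∃ i : Fin m, i ≠ ⟨0, hm⟩ ∧ q = f i} :=
  gaAction_of_coords_general hm f hgen σ hσ1 hσ2
end

section
/- Let k be a field of characteristic zero and n ≥ 2. Suppose that for every G_a-action on k[x_1,...,x_n] with A := k[x_1,x_2] ∩ (invariant ring) not equal to k or to k[x_1,x_2], there exists a coordinate g of k[x_1,x_2] with A = k[g]. Then every stable G_a-invariant f of k[x_1,x_2] with f ∉ k is an invariant for some nontrivial G_a-action on k[x_1,x_2]. -/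
/-! The action witnessing that `f` is stable has `f` among its invariants but not all of
`k[x₁,x₂]`, so by the hypothesis `f ∈ k[g]` for a coordinate `g`. A coordinate extends to an
automorphism `φ` with `φ x₁ = g` (surjective endomorphisms of Noetherian rings are injective),
and conjugating the translation `x₂ ↦ x₂ + z` by `φ` gives a nontrivial action fixing `g`,
hence fixing every element of `k[g]`. -/

open MvPolynomial

/-- `f` is a coordinate of `k[x_1,…,x_m]`: there are `f_2,…,f_m` with
`k[f,f_2,…,f_m] = k[x_1,…,x_m]`. -/
def IsCoordinate {k : Type*} [CommRing k] {m : ℕ} (f : MvPolynomial (Fin m) k) : Prop :=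
  ∃ g : Fin (m - 1) → MvPolynomial (Fin m) k,
    Algebra.adjoin k (insert f (Set.range g)) = ⊤

theorem RingHom.injective_of_surjective_of_isNoetherianRing {R : Type*} [Ring R]
    [IsNoetherianRing R] (f : R →+* R) (hf : Function.Surjective f) : Function.Injective f := by
  have ker_iterate_mono : Monotone fun n => RingHom.ker (f ^ n) := by
    intro a b hab x hx
    obtain ⟨c, rfl⟩ := Nat.exists_eq_add_of_le hab
    simp only [RingHom.mem_ker, RingHom.coe_pow] at hx ⊢
    rw [add_comm, Function.iterate_add_apply, hx, iterate_map_zero]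
  obtain ⟨n, hn⟩ :=
    monotone_stabilizes_iff_noetherian.mpr inferInstance ⟨_, ker_iterate_mono⟩
  rw [injective_iff_map_eq_zero]
  intro a ha
  obtain ⟨b, rfl⟩ := (hf.iterate n) a
  have hb : b ∈ RingHom.ker (f ^ (n + 1)) := by
    rw [RingHom.mem_ker, RingHom.coe_pow, Function.iterate_succ_apply', ha]
  rwa [← show RingHom.ker (f ^ n) = RingHom.ker (f ^ (n + 1)) from hn _ n.le_succ,
    RingHom.mem_ker, RingHom.coe_pow] at hb

section Translation

variable (R : Type*) [CommRing R] {m : ℕ}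

noncomputable def translationAction (i : Fin m) :
    MvPolynomial (Fin m) R →ₐ[R] Polynomial (MvPolynomial (Fin m) R) :=
  aeval fun j => Polynomial.C (X j) + if j = i then Polynomial.X else 0

theorem translationAction_X_self (i : Fin m) :
    translationAction R i (X i) = Polynomial.C (X i) + Polynomial.X := by
  simp [translationAction]

theorem translationAction_X_of_ne {i j : Fin m} (h : j ≠ i) :
    translationAction R i (X j) = Polynomial.C (X j) := by
  simp [translationAction, h]

theorem isGaAction_translationAction (i : Fin m) :
    IsGaAction (translationAction R i) := by
  constructor
  · intro f
    have : (Polynomial.evalRingHom 0).comp (translationAction R i).toRingHom = RingHom.id _ := by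
      apply MvPolynomial.ringHom_ext
      · intro r; simp [translationAction]
      · intro j; by_cases h : j = i <;> simp [translationAction, h]
    exact DFunLike.congr_fun this f
  · intro f
    have : (Polynomial.eval₂RingHom (S := Polynomial (Polynomial (MvPolynomial (Fin m) R)))
          (Polynomial.C.comp (translationAction R i).toRingHom)
          Polynomial.X).comp (translationAction R i).toRingHom
        = (Polynomial.eval₂RingHom (S := Polynomial (Polynomial (MvPolynomial (Fin m) R)))
          (Polynomial.C.comp Polynomial.C)
          (Polynomial.C Polynomial.X + Polynomial.X)).comp (translationAction R i).toRingHom := by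
      apply MvPolynomial.ringHom_ext
      · intro r; simp [translationAction]
      · intro j; by_cases h : j = i <;> simp [translationAction, h, add_assoc]
    exact DFunLike.congr_fun this f

end Translation

theorem IsGaAction.conj {R : Type*} [CommRing R] {m : ℕ}
    {σ : MvPolynomial (Fin m) R →ₐ[R] Polynomial (MvPolynomial (Fin m) R)}
    (hσ : IsGaAction σ) (φ : MvPolynomial (Fin m) R ≃ₐ[R] MvPolynomial (Fin m) R) :
    IsGaAction ((Polynomial.mapAlgHom φ.toAlgHom).comp (σ.comp φ.symm.toAlgHom)) := by
  set σ' := (Polynomial.mapAlgHom φ.toAlgHom).comp (σ.comp φ.symm.toAlgHom)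
  have σ'_apply : ∀ f, σ' f = (σ (φ.symm f)).map (φ : MvPolynomial (Fin m) R →+* _) :=
    fun _ => rfl
  set ψ := Polynomial.mapRingHom
    (Polynomial.mapRingHom (φ : MvPolynomial (Fin m) R →+* MvPolynomial (Fin m) R))
  have ψ_comp_σ : ψ.comp (Polynomial.C.comp σ.toRingHom) =
      (Polynomial.C.comp σ'.toRingHom).comp (φ : MvPolynomial (Fin m) R →+* _) := by
    ext <;> simp [σ'_apply, ψ]
  have ψ_comp_C : ψ.comp (Polynomial.C.comp Polynomial.C) =
      (Polynomial.C.comp Polynomial.C).comp (φ : MvPolynomial (Fin m) R →+* _) := by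
    ext <;> simp [ψ]
  have hψX : ψ Polynomial.X = Polynomial.X := by simp [ψ]
  have hψCX : ψ (Polynomial.C Polynomial.X + Polynomial.X) =
      Polynomial.C Polynomial.X + Polynomial.X := by simp [ψ]
  refine ⟨fun f => ?_, fun f => ?_⟩
  · rw [σ'_apply, Polynomial.eval_map, Polynomial.eval₂_at_zero,
      Polynomial.coeff_zero_eq_eval_zero, hσ.1]
    exact φ.apply_symm_apply f
  · rw [σ'_apply, Polynomial.eval₂_map, ← ψ_comp_σ, ← hψX, ← Polynomial.hom_eval₂,
      hσ.2, Polynomial.hom_eval₂, hψCX, ψ_comp_C, ← Polynomial.eval₂_map, hψX]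

theorem IsCoordinate.exists_algEquiv {R : Type*} [CommRing R] [IsNoetherianRing R] {m : ℕ}
    {g : MvPolynomial (Fin (m + 1)) R} (hg : IsCoordinate g) :
    ∃ φ : MvPolynomial (Fin (m + 1)) R ≃ₐ[R] MvPolynomial (Fin (m + 1)) R, φ (X 0) = g := by
  obtain ⟨g', hg'⟩ := hg
  set φ : MvPolynomial (Fin (m + 1)) R →ₐ[R] MvPolynomial (Fin (m + 1)) R :=
    aeval (Fin.cons g g')
  have hφ : Function.Surjective φ := by
    rw [← AlgHom.range_eq_top, eq_top_iff, ← hg', Algebra.adjoin_le_iff]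
    rintro _ (rfl | ⟨j, rfl⟩)
    · exact ⟨X 0, by simp [φ]⟩
    · exact ⟨X j.succ, by simp [φ]⟩
  exact ⟨AlgEquiv.ofBijective φ
    ⟨RingHom.injective_of_surjective_of_isNoetherianRing φ.toRingHom hφ, hφ⟩, by simp [φ]⟩

theorem IsCoordinate.exists_nontrivial_gaAction_fixing {R : Type*} [CommRing R]
    [IsNoetherianRing R] [Nontrivial R] {m : ℕ} {g : MvPolynomial (Fin (m + 2)) R}
    (hg : IsCoordinate g) :
    ∃ σ : MvPolynomial (Fin (m + 2)) R →ₐ[R] Polynomial (MvPolynomial (Fin (m + 2)) R),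
      IsGaAction σ ∧ (∃ p, σ p ∉ Set.range Polynomial.C) ∧ σ g = Polynomial.C g := by
  obtain ⟨φ, rfl⟩ := hg.exists_algEquiv
  refine ⟨_, (isGaAction_translationAction R (Fin.last (m + 1))).conj φ,
    ⟨φ (X (Fin.last _)), ?_⟩, ?_⟩
  · rintro ⟨c, hc⟩
    have := congrArg (Polynomial.coeff · 1) hc
    simp [translationAction_X_self] at this
  · simp [translationAction_X_of_ne R Fin.last_pos.ne]

theorem AlgHom.apply_eq_C_of_mem_adjoin_singleton {R A : Type*} [CommSemiring R]
    [CommSemiring A] [Algebra R A] (σ : A →ₐ[R] Polynomial A) {g p : A}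
    (hg : σ g = Polynomial.C g) (hp : p ∈ Algebra.adjoin R {g}) : σ p = Polynomial.C p :=
  AlgHom.adjoin_le_equalizer σ Polynomial.CAlgHom (by simpa using hg) hp

theorem stableInvariant_is_invariant_general {k : Type*} [Field k]
    (H : ∀ (n : ℕ) (h2 : 2 ≤ n)
      (σ : MvPolynomial (Fin n) k →ₐ[k] Polynomial (MvPolynomial (Fin n) k)),
      IsGaAction σ →
      (∃ p : MvPolynomial (Fin 2) k,
        σ (rename (Fin.castLE h2) p) ∈ Set.range Polynomial.C ∧
        p ∉ Set.range (MvPolynomial.C : k → MvPolynomial (Fin 2) k)) →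
      (∃ p : MvPolynomial (Fin 2) k,
        σ (rename (Fin.castLE h2) p) ∉ Set.range Polynomial.C) →
      ∃ g : MvPolynomial (Fin 2) k, IsCoordinate g ∧
        ∀ p : MvPolynomial (Fin 2) k,
          σ (rename (Fin.castLE h2) p) ∈ Set.range Polynomial.C ↔
          p ∈ Algebra.adjoin k {g})
    (f : MvPolynomial (Fin 2) k) (hf : IsStableGaInvariant f)
    (hfk : f ∉ Set.range (MvPolynomial.C : k → MvPolynomial (Fin 2) k)) :
    ∃ σ : MvPolynomial (Fin 2) k →ₐ[k] Polynomial (MvPolynomial (Fin 2) k),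
      IsGaAction σ ∧ (∃ p, σ p ∉ Set.range Polynomial.C) ∧
      σ f ∈ Set.range Polynomial.C := by
  obtain ⟨n, hn, τ, hτ, hτf, hτ_nontrivial⟩ := hf
  push Not at hτ_nontrivial
  obtain ⟨g, hg, hτ_invariants⟩ := H n hn τ hτ ⟨f, hτf, hfk⟩ hτ_nontrivial
  obtain ⟨σ, hσ, hσ_nontrivial, hσg⟩ := hg.exists_nontrivial_gaAction_fixing (m := 0)
  exact ⟨σ, hσ, hσ_nontrivial,
    f, (σ.apply_eq_C_of_mem_adjoin_singleton hσg ((hτ_invariants f).mp hτf)).symm⟩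

/-- Every stable `G_a`-invariant of `k[x_1,x_2]` not in `k` is an invariant of a
nontrivial `G_a`-action on `k[x_1,x_2]`, granted that for every `G_a`-action on
`k[x_1,…,x_n]` whose invariant ring meets `k[x_1,x_2]` in a subalgebra `A` different
from `k` and from `k[x_1,x_2]`, one has `A = k[g]` for some coordinate `g`. -/
theorem stableInvariant_is_invariant {k : Type*} [Field k] [CharZero k]
    (H : ∀ (n : ℕ) (h2 : 2 ≤ n)
      (σ : MvPolynomial (Fin n) k →ₐ[k] Polynomial (MvPolynomial (Fin n) k)),
      IsGaAction σ →
      (∃ p : MvPolynomial (Fin 2) k,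
        σ (rename (Fin.castLE h2) p) ∈ Set.range Polynomial.C ∧
        p ∉ Set.range (MvPolynomial.C : k → MvPolynomial (Fin 2) k)) →
      (∃ p : MvPolynomial (Fin 2) k,
        σ (rename (Fin.castLE h2) p) ∉ Set.range Polynomial.C) →
      ∃ g : MvPolynomial (Fin 2) k, IsCoordinate g ∧
        ∀ p : MvPolynomial (Fin 2) k,
          σ (rename (Fin.castLE h2) p) ∈ Set.range Polynomial.C ↔
          p ∈ Algebra.adjoin k {g})
    (f : MvPolynomial (Fin 2) k) (hf : IsStableGaInvariant f)
    (hfk : f ∉ Set.range (MvPolynomial.C : k → MvPolynomial (Fin 2) k)) :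
    ∃ σ : MvPolynomial (Fin 2) k →ₐ[k] Polynomial (MvPolynomial (Fin 2) k),
      IsGaAction σ ∧ (∃ p, σ p ∉ Set.range Polynomial.C) ∧
      σ f ∈ Set.range Polynomial.C :=
  stableInvariant_is_invariant_general H f hf hfk
end
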